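/- Let W ∈ R^{n_s×ℓ_s}, V ∈ R^{n_d×ℓ_d} have orthonormal columns, let J̃_k = v_k ⊛ J for each column v_k of V, and let W^T [J̃_1 … J̃_{ℓ_d}] = Φ Ω Ψ^T be an SVD. Then Γ = [φ_1 … φ_{ℓ_s - s}] solves argmax over Γ̃ ∈ R^{ℓ_s×(ℓ_s−s)} with orthonormal columns of ‖((W Γ̃)^T ⊗ V^T) J‖_F^2. -/

import Mathlib

open Matrix
open scoped BigOperators Kronecker

/-- Squared Frobenius norm of a real matrix. -/
def frobSq {α β : Type*} [Fintype α] [Fintype β] (A : Matrix α β ℝ) : ℝ :=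
  ∑ i, ∑ j, A i j ^ 2

/-- For `v ∈ ℝ^{n_d}`, `v ⊛ J ∈ ℝ^{n_s × n_p}` has `(j,k)` entry `vᵀ J_{j,k}`. -/
def circStarOp {nd ns np : ℕ} (v : Fin nd → ℝ) (J : Matrix (Fin ns × Fin nd) (Fin np) ℝ) :
    Matrix (Fin ns) (Fin np) ℝ :=
  Matrix.of fun j k => ∑ i, v i * J (j, i) k

/-- Rectangular "diagonal" matrix of singular values, the column index being a product
type enumerated by `finProdFinEquiv`. -/
def svDiagR (m : ℕ) (a b : ℕ) (ω : ℕ → ℝ) : Matrix (Fin m) (Fin a × Fin b) ℝ :=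
  Matrix.of fun i q => if (i : ℕ) = ((finProdFinEquiv q : Fin (a * b)) : ℕ) then ω i else 0

/-!
Write `M = Wᵀ [J̃_1 … J̃_{ℓ_d}] = Φ Ω Ψᵀ`. Entrywise, `((W Γ̃)ᵀ ⊗ Vᵀ) J` is a reshaping of
`Γ̃ᵀ M`, so, `Ψ` being orthogonal, the objective is `∑ᵢ ωᵢ² cᵢ` with `cᵢ = ∑ₐ (Γ̃ᵀ Φ)ₐᵢ²`.
Since `Γ̃ᵀ Φ` has orthonormal rows, every `cᵢ` lies in `[0, 1]` and they sum to `ℓ_s - s`;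
as the `ωᵢ²` decrease, such a weighted sum is largest when `c` is the indicator of the first
`ℓ_s - s` indices, which is exactly what the leading columns of `Φ` achieve.
-/

section Frobenius

variable {α β γ : Type*} [Fintype α] [Fintype β] [Fintype γ]

lemma frobSq_eq_trace (A : Matrix α β ℝ) : frobSq A = (A * Aᵀ).trace := by
  simp [frobSq, Matrix.trace, Matrix.mul_apply, sq]

lemma frobSq_of_uncurry (A : Matrix α (β × γ) ℝ) :
    frobSq (Matrix.of fun (x : α × β) c => A x.1 (x.2, c)) = frobSq A := by
  simp [frobSq, Fintype.sum_prod_type]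

lemma frobSq_mul_transpose_of_orthogonal [DecidableEq β] (A : Matrix α β ℝ)
    {Q : Matrix β β ℝ} (hQ : Qᵀ * Q = 1) : frobSq (A * Qᵀ) = frobSq A := by
  rw [frobSq_eq_trace, frobSq_eq_trace, transpose_mul, transpose_transpose, Matrix.mul_assoc,
    ← Matrix.mul_assoc Qᵀ, hQ, Matrix.one_mul]

lemma frobSq_mul_mul_transpose [DecidableEq β] [DecidableEq γ] (B : Matrix α β ℝ)
    {D : Matrix β γ ℝ} {σ : β → ℝ} (hD : D * Dᵀ = diagonal σ)
    {Q : Matrix γ γ ℝ} (hQ : Qᵀ * Q = 1) :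
    frobSq (B * D * Qᵀ) = ∑ i, σ i * ∑ a, B a i ^ 2 := by
  rw [frobSq_mul_transpose_of_orthogonal _ hQ, frobSq_eq_trace, transpose_mul,
    Matrix.mul_assoc, ← Matrix.mul_assoc D, hD]
  simp only [Matrix.trace, Matrix.diag, Matrix.mul_apply, diagonal_apply, transpose_apply]
  rw [Finset.sum_comm]
  refine Finset.sum_congr rfl fun i _ => ?_
  rw [Finset.mul_sum]
  refine Finset.sum_congr rfl fun a _ => ?_
  simp only [ite_mul, zero_mul, Finset.sum_ite_eq, Finset.mem_univ, ↓reduceIte, sq]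
  ring

end Frobenius

lemma svDiagR_mul_transpose (m a b : ℕ) (ω : ℕ → ℝ) :
    svDiagR m a b ω * (svDiagR m a b ω)ᵀ
      = diagonal fun i : Fin m => if (i : ℕ) < a * b then ω i ^ 2 else 0 := by
  ext i i'
  simp only [Matrix.mul_apply, svDiagR, transpose_apply, of_apply, diagonal_apply]
  rw [← finProdFinEquiv.symm.sum_comp]
  simp only [Equiv.apply_symm_apply]
  rw [Fin.sum_univ_eq_sum_range (fun k => (if (i : ℕ) = k then ω i else 0) *
    if (i' : ℕ) = k then ω i' else 0)]
  simp only [ite_mul, zero_mul, Finset.sum_ite_eq, Finset.mem_range, Fin.val_inj]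
  rcases eq_or_ne i i' with rfl | h
  · simp [sq]
  · simp [h, h.symm]

lemma sum_ite_lt_one {n r : ℕ} (hr : r ≤ n) :
    ∑ i : Fin n, (if (i : ℕ) < r then (1 : ℝ) else 0) = r := by
  rw [Finset.sum_boole, Fin.card_filter_val_lt, min_eq_right hr]

/-- Compare each term with the pivot `σ r`: `σ i (c i - d i) ≤ σ r (c i - d i)` for the
indicator `d` of `{i < r}`, and the right-hand sides sum to zero. -/
lemma sum_mul_le_sum_mul_ite_lt {n r : ℕ} (hr : r ≤ n) {σ : ℕ → ℝ} (hσ : Antitone σ)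
    {c : Fin n → ℝ} (hc0 : ∀ i, 0 ≤ c i) (hc1 : ∀ i, c i ≤ 1) (hsum : ∑ i, c i = r) :
    ∑ i : Fin n, σ i * c i ≤ ∑ i : Fin n, σ i * if (i : ℕ) < r then 1 else 0 := by
  have hpivot : ∀ i : Fin n,
      σ i * c i - σ i * (if (i : ℕ) < r then 1 else 0)
        ≤ σ r * (c i - if (i : ℕ) < r then 1 else 0) := by
    intro i
    split_ifs with h
    · nlinarith [hσ h.le, hc1 i]
    · nlinarith [hσ (not_lt.mp h), hc0 i]
  have := Finset.sum_le_sum fun i (_ : i ∈ Finset.univ) => hpivot i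
  rw [Finset.sum_sub_distrib, ← Finset.mul_sum, Finset.sum_sub_distrib, hsum,
    sum_ite_lt_one hr, sub_self, mul_zero] at this
  linarith

section OrthonormalRows

variable {α β : Type*} [Fintype α] [Fintype β] [DecidableEq α] {B : Matrix α β ℝ}

lemma sum_sum_sq_eq_card_of_mul_transpose_eq_one (hB : B * Bᵀ = 1) :
    ∑ i, ∑ a, B a i ^ 2 = Fintype.card α := by
  have h := congrArg Matrix.trace hB
  rw [trace_one] at h
  rw [Finset.sum_comm, ← h]
  simp [Matrix.trace, Matrix.mul_apply, sq]

/-- `P = Bᵀ B` is a symmetric idempotent, so `P i i = ∑ j, P i j ^ 2 ≥ P i i ^ 2`. -/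
lemma sum_sq_le_one_of_mul_transpose_eq_one (hB : B * Bᵀ = 1) (i : β) :
    ∑ a, B a i ^ 2 ≤ 1 := by
  set P := Bᵀ * B
  have hP : P * P = P := by
    rw [Matrix.mul_assoc, ← Matrix.mul_assoc B, hB, Matrix.one_mul]
  have hPii : P i i = ∑ a, B a i ^ 2 := by simp [P, Matrix.mul_apply, sq]
  have hsq : P i i ^ 2 ≤ P i i :=
    calc P i i ^ 2 ≤ ∑ j, P i j ^ 2 :=
          Finset.single_le_sum (fun j _ => sq_nonneg (P i j)) (Finset.mem_univ i)
      _ = P i i := by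
          conv_rhs => rw [← hP]
          simp only [Matrix.mul_apply, sq]
          refine Finset.sum_congr rfl fun j _ => ?_
          rw [show P j i = P i j from by simp [P, Matrix.mul_apply, mul_comm]]
  rw [← hPii]
  nlinarith

end OrthonormalRows

section LeadingColumns

variable {ι n : Type*} [Fintype n] [DecidableEq n] {Φ : Matrix n n ℝ}

lemma transpose_submatrix_mul_self_of_orthogonal (hΦ : Φᵀ * Φ = 1) (f : ι → n) :
    (Φ.submatrix id f)ᵀ * Φ = (1 : Matrix n n ℝ).submatrix f id := by
  rw [transpose_submatrix, ← hΦ, submatrix_mul _ _ f id id Function.bijective_id, submatrix_id_id]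

lemma transpose_submatrix_mul_submatrix_of_orthogonal [DecidableEq ι] (hΦ : Φᵀ * Φ = 1)
    {f : ι → n} (hf : Function.Injective f) :
    (Φ.submatrix id f)ᵀ * Φ.submatrix id f = 1 := by
  rw [transpose_submatrix, ← submatrix_mul _ _ f id f Function.bijective_id, hΦ,
    submatrix_one f hf]

end LeadingColumns

lemma sum_sq_one_castLE {r n : ℕ} (h : r ≤ n) (i : Fin n) :
    ∑ a : Fin r, (1 : Matrix (Fin n) (Fin n) ℝ) (Fin.castLE h a) i ^ 2
      = if (i : ℕ) < r then 1 else 0 := by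
  simp only [one_apply, Fin.ext_iff, Fin.val_castLE, ite_pow, one_pow, ne_eq,
    OfNat.ofNat_ne_zero, not_false_eq_true, zero_pow, Finset.sum_boole]
  split_ifs with hi
  · rw [Finset.card_eq_one.mpr ⟨⟨i, hi⟩, by ext; simp [Fin.ext_iff, eq_comm]⟩, Nat.cast_one]
  · simp only [Nat.cast_eq_zero, Finset.card_eq_zero, Finset.filter_eq_empty_iff]
    omega

lemma kronecker_mul_eq_of_circStarOp {nd ns np ls ld : ℕ} {ι : Type*} [Fintype ι]
    (J : Matrix (Fin ns × Fin nd) (Fin np) ℝ) (W : Matrix (Fin ns) (Fin ls) ℝ)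
    (V : Matrix (Fin nd) (Fin ld) ℝ) (Γ : Matrix (Fin ls) ι ℝ) :
    ((W * Γ)ᵀ ⊗ₖ Vᵀ) * J = Matrix.of fun x p => (Γᵀ * (Wᵀ * Matrix.of fun j (q : Fin ld × Fin np) =>
      circStarOp (fun i => V i q.1) J j q.2)) x.1 (x.2, p) := by
  ext ⟨a, b⟩ p
  simp only [Matrix.mul_apply, kroneckerMap_apply, transpose_apply, of_apply, circStarOp,
    Fintype.sum_prod_type, Finset.mul_sum, Finset.sum_mul]
  refine (Finset.sum_congr rfl fun j _ => Finset.sum_comm).trans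
    (Finset.sum_comm.trans (Finset.sum_congr rfl fun l _ =>
      Finset.sum_congr rfl fun j _ => Finset.sum_congr rfl fun i _ => by ring))

lemma frobSq_kronecker_mul_eq_sum_mul_sum_sq {nd ns np ls ld : ℕ} {ι : Type*} [Fintype ι]
    {J : Matrix (Fin ns × Fin nd) (Fin np) ℝ} {W : Matrix (Fin ns) (Fin ls) ℝ}
    {V : Matrix (Fin nd) (Fin ld) ℝ} {Φ : Matrix (Fin ls) (Fin ls) ℝ}
    {Ψ : Matrix (Fin ld × Fin np) (Fin ld × Fin np) ℝ} {ω : ℕ → ℝ} (hΨ : Ψᵀ * Ψ = 1)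
    (hSVD : Wᵀ * (Matrix.of fun j (q : Fin ld × Fin np) => circStarOp (fun i => V i q.1) J j q.2)
      = Φ * svDiagR ls ld np ω * Ψᵀ)
    (Γ : Matrix (Fin ls) ι ℝ) :
    frobSq (((W * Γ)ᵀ ⊗ₖ Vᵀ) * J)
      = ∑ i : Fin ls, (if (i : ℕ) < ld * np then ω i ^ 2 else 0) * ∑ a, (Γᵀ * Φ) a i ^ 2 := by
  rw [kronecker_mul_eq_of_circStarOp, frobSq_of_uncurry, hSVD, ← Matrix.mul_assoc,
    ← Matrix.mul_assoc]
  exact frobSq_mul_mul_transpose _ (svDiagR_mul_transpose ls ld np ω) hΨ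

lemma antitone_ite_lt_sq {ω : ℕ → ℝ} (hω : Antitone ω) (hω0 : ∀ i, 0 ≤ ω i) (N : ℕ) :
    Antitone fun k => if k < N then ω k ^ 2 else 0 := by
  intro i j hij
  dsimp only
  split_ifs with hj hi hi
  · exact pow_le_pow_left₀ (hω0 j) (hω hij) 2
  · omega
  · positivity
  · rfl

theorem downdating_sources_optimal_general
    (nd ns np ls ld s : ℕ)
    (J : Matrix (Fin ns × Fin nd) (Fin np) ℝ)
    (W : Matrix (Fin ns) (Fin ls) ℝ) (V : Matrix (Fin nd) (Fin ld) ℝ)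
    (Φ : Matrix (Fin ls) (Fin ls) ℝ) (Ψ : Matrix (Fin ld × Fin np) (Fin ld × Fin np) ℝ)
    (ω : ℕ → ℝ)
    (hΦ : Φᵀ * Φ = 1) (hΨ : Ψᵀ * Ψ = 1)
    (hword : ∀ i j : ℕ, i ≤ j → ω j ≤ ω i) (hw0 : ∀ i, 0 ≤ ω i)
    (hSVD : Wᵀ * (Matrix.of fun j (q : Fin ld × Fin np) => circStarOp (fun i => V i q.1) J j q.2)
      = Φ * svDiagR ls ld np ω * Ψᵀ) :
    IsGreatest
      {x : ℝ | ∃ Γt : Matrix (Fin ls) (Fin (ls - s)) ℝ, Γtᵀ * Γt = 1 ∧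
        x = frobSq (((W * Γt)ᵀ ⊗ₖ Vᵀ) * J)}
      (frobSq (((W * Φ.submatrix id (Fin.castLE (Nat.sub_le ls s)))ᵀ ⊗ₖ Vᵀ) * J)) := by
  have hr := Nat.sub_le ls s
  refine ⟨⟨_, transpose_submatrix_mul_submatrix_of_orthogonal hΦ (Fin.castLE_injective hr),
    rfl⟩, ?_⟩
  rintro x ⟨Γ, hΓ, rfl⟩
  have hB : (Γᵀ * Φ) * (Γᵀ * Φ)ᵀ = 1 := by
    rw [transpose_mul, transpose_transpose, Matrix.mul_assoc, ← Matrix.mul_assoc Φ,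
      mul_eq_one_comm.mp hΦ, Matrix.one_mul, hΓ]
  rw [frobSq_kronecker_mul_eq_sum_mul_sum_sq hΨ hSVD,
    frobSq_kronecker_mul_eq_sum_mul_sum_sq hΨ hSVD, transpose_submatrix_mul_self_of_orthogonal hΦ]
  simp only [submatrix_apply, id, sum_sq_one_castLE hr]
  refine sum_mul_le_sum_mul_ite_lt hr (antitone_ite_lt_sq hword hw0 _)
    (fun i => Finset.sum_nonneg fun a _ => sq_nonneg _)
    (sum_sq_le_one_of_mul_transpose_eq_one hB) ?_
  rw [sum_sum_sq_eq_card_of_mul_transpose_eq_one hB, Fintype.card_fin]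

/-- Let `W, V` have orthonormal columns, `J̃_b = v_b ⊛ J` for the columns `v_b` of `V`,
and let `Wᵀ [J̃_1 … J̃_{ℓ_d}] = Φ Ω Ψᵀ` be an SVD with decreasing singular values.
Then `Γ = [φ_1 … φ_{ℓ_s - s}]` maximizes `‖((W Γ̃)ᵀ ⊗ Vᵀ) J‖_F²` over all
`Γ̃ ∈ ℝ^{ℓ_s × (ℓ_s - s)}` with orthonormal columns. -/
theorem downdating_sources_optimal
    (nd ns np ls ld s : ℕ) (hs : s < ls)
    (J : Matrix (Fin ns × Fin nd) (Fin np) ℝ)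
    (W : Matrix (Fin ns) (Fin ls) ℝ) (V : Matrix (Fin nd) (Fin ld) ℝ)
    (hW : Wᵀ * W = 1) (hV : Vᵀ * V = 1)
    (Φ : Matrix (Fin ls) (Fin ls) ℝ) (Ψ : Matrix (Fin ld × Fin np) (Fin ld × Fin np) ℝ)
    (ω : ℕ → ℝ)
    (hΦ : Φᵀ * Φ = 1) (hΨ : Ψᵀ * Ψ = 1)
    (hword : ∀ i j : ℕ, i ≤ j → ω j ≤ ω i) (hw0 : ∀ i, 0 ≤ ω i)
    (hSVD : Wᵀ * (Matrix.of fun j (q : Fin ld × Fin np) => circStarOp (fun i => V i q.1) J j q.2)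
      = Φ * svDiagR ls ld np ω * Ψᵀ) :
    IsGreatest
      {x : ℝ | ∃ Γt : Matrix (Fin ls) (Fin (ls - s)) ℝ, Γtᵀ * Γt = 1 ∧
        x = frobSq (((W * Γt)ᵀ ⊗ₖ Vᵀ) * J)}
      (frobSq (((W * Φ.submatrix id (Fin.castLE (Nat.sub_le ls s)))ᵀ ⊗ₖ Vᵀ) * J)) :=
  downdating_sources_optimal_general nd ns np ls ld s J W V Φ Ψ ω hΦ hΨ hword hw0 hSVD
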